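/- The map φ : EW_{m,n} → LRib_{m,n} is injective: if A, B are rectangular EW-tableaux with m rows and n columns and φ(A) = φ(B), then A = B. -/

import Mathlib

/- Combinatorial objects from "EW-tableaux and parallelogram polyominoes".
A tableau of type `(m+1, n+1)` (i.e. with `m+1` rows and `n+1` columns) is a
0/1-filling, encoded as a function to `Bool` (`true` = 1).  Rows are indexed
top to bottom, columns left to right, both starting at `0`.  The row labelled
`v i` (for `i < m+1`) and the column labelled `v ((m+1)+j)` (for `j < n+1`)
are recorded through permutations `rl`, `cl` of `Fin (m+1)`, `Fin (n+1)`. -/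

namespace EWPaper

/-- A 0/1 tableau with `m+1` rows and `n+1` columns; `true` encodes the entry 1. -/
abbrev Tab (m n : ℕ) := Fin (m + 1) → Fin (n + 1) → Bool

variable {m n : ℕ}

/-- A rectangular EW-tableau: the top row is all 1s, every other row contains a 0,
and no four cells forming the corners of a rectangle carry 0s in two diagonally
opposite corners and 1s in the other two. -/
def IsEW (T : Tab m n) : Prop :=
  (∀ j, T 0 j = true) ∧
  (∀ i : Fin (m + 1), i ≠ 0 → ∃ j, T i j = false) ∧
  (∀ (i i' : Fin (m + 1)) (j j' : Fin (n + 1)), i ≠ i' → j ≠ j' →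
    T i j = true → T i' j' = true → (T i j' = true ∨ T i' j = true))

/-- The (0-based) column index of the leftmost 1 of row `i`. -/
noncomputable def leftmost (T : Tab m n) (i : Fin (m + 1)) : ℕ :=
  sInf {j : ℕ | ∃ h : j < n + 1, T i ⟨j, h⟩ = true}

/-- The (0-based) column index of the rightmost 1 of row `i`. -/
noncomputable def rightmost (T : Tab m n) (i : Fin (m + 1)) : ℕ :=
  sSup {j : ℕ | ∃ h : j < n + 1, T i ⟨j, h⟩ = true}

/-- The (0-based) row index of the topmost 1 of column `j`. -/
noncomputable def topmost (T : Tab m n) (j : Fin (n + 1)) : ℕ :=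
  sInf {i : ℕ | ∃ h : i < m + 1, T ⟨i, h⟩ j = true}

/-- Parallelogram polyomino (as a 0/1 tableau): 1s in the two corners `(1,1)` and
`(m,n)`; every row has a nonempty contiguous set of 1s; leftmost and rightmost 1s
of the rows move weakly to the right going down. -/
def IsPara (T : Tab m n) : Prop :=
  T 0 0 = true ∧ T (Fin.last m) (Fin.last n) = true ∧
  (∀ i, ∃ j, T i j = true) ∧
  (∀ (i : Fin (m + 1)) (j j' j'' : Fin (n + 1)),
    j ≤ j' → j' ≤ j'' → T i j = true → T i j'' = true → T i j' = true) ∧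
  (∀ i i' : Fin (m + 1), i ≤ i' → leftmost T i ≤ leftmost T i') ∧
  (∀ i i' : Fin (m + 1), i ≤ i' → rightmost T i ≤ rightmost T i')

/-- The number of 1s of a tableau. -/
def ones (T : Tab m n) : ℕ :=
  (Finset.univ.filter fun p : Fin (m + 1) × Fin (n + 1) => T p.1 p.2 = true).card

/-- Ribbon parallelogram polyomino: a parallelogram polyomino of type `(m+1, n+1)`
with the minimal number `(m+1) + (n+1) - 1` of 1s. -/
def IsRib (T : Tab m n) : Prop := IsPara T ∧ ones T = m + n + 1

/-- A row- and column-labelled tableau: row `i` carries the label `v (rl i)` and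
column `j` carries the label `v ((m+1) + cl j)`. -/
structure Labelled (m n : ℕ) where
  T : Tab m n
  rl : Equiv.Perm (Fin (m + 1))
  cl : Equiv.Perm (Fin (n + 1))

/-- Labelled parallelogram polyomino: the underlying tableau is a parallelogram
polyomino, the top row is labelled `v 0`, rows whose leftmost 1s are the same
distance from the left side have labels increasing top to bottom, and columns
whose topmost 1s are at the same height have labels increasing left to right. -/
def IsLPara (D : Labelled m n) : Prop :=
  IsPara D.T ∧ D.rl 0 = 0 ∧
  (∀ i i' : Fin (m + 1), leftmost D.T i = leftmost D.T i' → i < i' → D.rl i < D.rl i') ∧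
  (∀ j j' : Fin (n + 1), topmost D.T j = topmost D.T j' → j < j' → D.cl j < D.cl j')

/-- Labelled ribbon parallelogram polyomino. -/
def IsLRib (D : Labelled m n) : Prop := IsLPara D ∧ ones D.T = m + n + 1

/-- Step 1 of `φ`: the stable sort of the columns by their number of 1s, ascending
(so that in an EW-tableau only 0s lie to the left of every 0), ties (identical
columns) broken by original label, increasing left to right. -/
def sortCols (T : Tab m n) : Equiv.Perm (Fin (n + 1)) :=
  Tuple.sort fun j => (Finset.univ.filter fun i => T i j = true).card

/-- Step 2 of `φ`: the stable sort of the rows by their number of 0s, ascending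
(so that in an EW-tableau only 1s lie above every 1), ties (identical rows)
broken by original label, increasing top to bottom. -/
def sortRows (T : Tab m n) : Equiv.Perm (Fin (m + 1)) :=
  Tuple.sort fun i => (Finset.univ.filter fun j => T i j = false).card

/-- The tableau `T'` of Steps 1–2 of `φ`. -/
def sortedTab (T : Tab m n) : Tab m n := fun i j => T (sortRows T i) (sortCols T j)

/-- Step 4 of `φ`: `R i j = 1` iff (`T' i j = 1` and (`i = m` or `T' (i+1) j = 0`)) or
(`T' i j = 0` and (`j = n` or `T' i (j+1) = 1`)). -/
def step4 (S : Tab m n) : Tab m n := fun i j =>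
  (S i j && decide (∀ i' : Fin (m + 1), (i' : ℕ) = (i : ℕ) + 1 → S i' j = false)) ||
  (!S i j && decide (∀ j' : Fin (n + 1), (j' : ℕ) = (j : ℕ) + 1 → S i j' = true))

/-- The map `φ`: sort rows and columns, apply Step 4, and remember, as the
labelling, where each row and column of the original tableau went. -/
def phi (T : Tab m n) : Labelled m n :=
  ⟨step4 (sortedTab T), sortRows T, sortCols T⟩

/-- The tableau `T'` of the definition of `ψ`:
`T'_{ij} = 1` iff `(i,j) = (1,1)` or there is `k < j` with `R i k = 1`. -/
def psiPre (R : Tab m n) : Tab m n := fun i j =>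
  decide ((i = 0 ∧ j = 0) ∨ ∃ k : Fin (n + 1), k < j ∧ R i k = true)

/-- The map `ψ`: form `psiPre` of the underlying tableau and permute rows and
columns so that row and column labels are increasing (row `i` of the result is
the row of `psiPre D.T` labelled `v i`, and similarly for columns). -/
def psi (D : Labelled m n) : Tab m n := fun i j =>
  psiPre D.T (D.rl.symm i) (D.cl.symm j)

/-- The entry of `T` at `(i, j)` is a cornersupport entry: there is a
non-attacking entry with the opposite value at `(i', j')` such that the
other two corners `(i', j)` and `(i, j')` carry the same value as `(i, j)`. -/
def Cornersupport (T : Tab m n) (i : Fin (m + 1)) (j : Fin (n + 1)) : Prop :=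
  ∃ (i' : Fin (m + 1)) (j' : Fin (n + 1)),
    i' ≠ i ∧ j' ≠ j ∧ T i' j' ≠ T i j ∧ T i' j = T i j ∧ T i j' = T i j

instance (T : Tab m n) (i : Fin (m + 1)) (j : Fin (n + 1)) :
    Decidable (Cornersupport T i j) := by
  unfold Cornersupport; infer_instance

/-- `η` of the row labelled `v i`: the number of non-cornersupport 0s in row `i`. -/
def etaRow (T : Tab m n) (i : Fin (m + 1)) : ℕ :=
  (Finset.univ.filter fun j => T i j = false ∧ ¬ Cornersupport T i j).card

/-- `η` of the column labelled `v ((m+1)+j)`: the number of non-cornersupport 1s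
in column `j`. -/
def etaCol (T : Tab m n) (j : Fin (n + 1)) : ℕ :=
  (Finset.univ.filter fun i => T i j = true ∧ ¬ Cornersupport T i j).card

/-- A marked/decorated rectangular EW-tableau: a tableau together with a
decoration value for each row below the first (recorded as `arow`, with the
normalisation `arow 0 = 0` for the unmarked top row) and each column (`acol`). -/
structure MEW (m n : ℕ) where
  T : Tab m n
  arow : Fin (m + 1) → ℕ
  acol : Fin (n + 1) → ℕ

/-- Membership in `MEW_{m+1,n+1}`: the tableau is an EW-tableau and the
decorations satisfy `0 ≤ a_i ≤ η_i(T) - 1`. -/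
def IsMEW (M : MEW m n) : Prop :=
  IsEW M.T ∧ M.arow 0 = 0 ∧
  (∀ i : Fin (m + 1), i ≠ 0 → M.arow i < etaRow M.T i) ∧
  (∀ j : Fin (n + 1), M.acol j < etaCol M.T j)

/-- The expansion `⟨D, ζ⟩` of a labelled ribbon parallelogram polyomino `D` by a
surplus vector `ζ` (indexed by labels): the row labelled `v i` gets `ζ i` cells
appended to the left of its leftmost 1, the column labelled `v ((m+1)+j)` gets
`ζ' j` cells appended above its topmost 1; the rows and columns are then
reordered so as to satisfy the labelling convention (sorted by the position of
the new leftmost/topmost 1, ties broken by increasing label) and the interior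
is completed with 1s. -/
noncomputable def expand (D : Labelled m n)
    (zrow : Fin (m + 1) → ℕ) (zcol : Fin (n + 1) → ℕ) : Labelled m n :=
  let ell : Fin (m + 1) → ℕ := fun x => leftmost D.T x - zrow (D.rl x)
  let top : Fin (n + 1) → ℕ := fun y => topmost D.T y - zcol (D.cl y)
  let σ : Equiv.Perm (Fin (m + 1)) := Tuple.sort fun x => toLex (ell x, (D.rl x : ℕ))
  let τ : Equiv.Perm (Fin (n + 1)) := Tuple.sort fun y => toLex (top y, (D.cl y : ℕ))
  ⟨fun i j => decide (ell (σ i) ≤ (j : ℕ) ∧ top (τ j) ≤ (i : ℕ)),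
    σ.trans D.rl, τ.trans D.cl⟩

/-- The map `Φ` from marked EW-tableaux to labelled parallelogram polyominoes:
`Φ(T, a) = ⟨φ(T), ζ⟩` where `ζ_i = η_i(T) - a_i - 1`. -/
noncomputable def Phi (M : MEW m n) : Labelled m n :=
  expand (phi M.T) (fun i => etaRow M.T i - M.arow i - 1)
    (fun j => etaCol M.T j - M.acol j - 1)

/-- ℕ-indexed version of `rightmost` (junk value for out-of-range rows). -/
noncomputable def rmaxN (P : Tab m n) (i : ℕ) : ℕ :=
  sSup {j : ℕ | ∃ (hi : i < m + 1) (hj : j < n + 1), P ⟨i, hi⟩ ⟨j, hj⟩ = true}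

/-- The lowest 1 of column `j` (ℕ-indexed, junk value for out-of-range columns). -/
noncomputable def bmaxN (P : Tab m n) (j : ℕ) : ℕ :=
  sSup {i : ℕ | ∃ (hi : i < m + 1) (hj : j < n + 1), P ⟨i, hi⟩ ⟨j, hj⟩ = true}

/-- The rows of the successive horizontal segments of the bounce path of `P`:
start in row 0; having arrived in row `i`, move right to the rightmost 1 of
row `i` and then down to the lowest 1 of that column. -/
noncomputable def bncI (P : Tab m n) : ℕ → ℕ
  | 0 => 0
  | k + 1 => bmaxN P (rmaxN P (bncI P k))

/-- The columns of the successive vertical segments of the bounce path of `P`. -/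
noncomputable def bncJ (P : Tab m n) (k : ℕ) : ℕ := rmaxN P (bncI P k)

/-- The cell `(i, j)` is visited by the bounce path of `P`: it lies on the `k`-th
horizontal segment (row `bncI k`, columns `bncJ (k-1)` to `bncJ k`, starting at
column 0 when `k = 0`) or on the `k`-th vertical segment (column `bncJ k`, rows
`bncI k` to `bncI (k+1)`) for some `k`. -/
def BounceCell (P : Tab m n) (i j : ℕ) : Prop :=
  ∃ k : ℕ,
    (i = bncI P k ∧ (match k with | 0 => 0 | k' + 1 => bncJ P k') ≤ j ∧ j ≤ bncJ P k) ∨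
    (j = bncJ P k ∧ bncI P k ≤ i ∧ i ≤ bncI P (k + 1))

/-- The bounce path of `P`, as the 0/1 tableau whose 1s are exactly the cells
visited by the bounce path. -/
noncomputable def bounceTab (P : Tab m n) : Tab m n := fun i j =>
  @decide (BounceCell P (i : ℕ) (j : ℕ)) (Classical.propDecidable _)

/-- `rl'` is the row labelling of the bounce ribbon of `D` induced by `D`:
within each class of rows of `bounce D.T` having their leftmost 1 in the same
column, the labels increase top to bottom, and each such class carries the same
set of labels as it does under the labelling of `D`. -/
def InducedRows (D : Labelled m n) (rl' : Equiv.Perm (Fin (m + 1))) : Prop :=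
  (∀ i i' : Fin (m + 1), leftmost (bounceTab D.T) i = leftmost (bounceTab D.T) i' →
    i < i' → rl' i < rl' i') ∧
  (∀ c : ℕ,
    (Finset.univ.filter fun i => leftmost (bounceTab D.T) i = c).image rl' =
    (Finset.univ.filter fun i => leftmost (bounceTab D.T) i = c).image D.rl)

/-- `cl'` is the column labelling of the bounce ribbon of `D` induced by `D`. -/
def InducedCols (D : Labelled m n) (cl' : Equiv.Perm (Fin (n + 1))) : Prop :=
  (∀ j j' : Fin (n + 1), topmost (bounceTab D.T) j = topmost (bounceTab D.T) j' →
    j < j' → cl' j < cl' j') ∧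
  (∀ c : ℕ,
    (Finset.univ.filter fun j => topmost (bounceTab D.T) j = c).image cl' =
    (Finset.univ.filter fun j => topmost (bounceTab D.T) j = c).image D.cl)

/-- The surplus of the row label `v i`: the position of the leftmost 1 of the row
of the bounce ribbon labelled `v i` minus the position of the leftmost 1 of the
row of `D` labelled `v i`. -/
noncomputable def surpRow (D : Labelled m n) (rl' : Equiv.Perm (Fin (m + 1)))
    (i : Fin (m + 1)) : ℤ :=
  (leftmost (bounceTab D.T) (rl'.symm i) : ℤ) - (leftmost D.T (D.rl.symm i) : ℤ)

/-- The surplus of the column label `v ((m+1)+j)`. -/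
noncomputable def surpCol (D : Labelled m n) (cl' : Equiv.Perm (Fin (n + 1)))
    (j : Fin (n + 1)) : ℤ :=
  (topmost (bounceTab D.T) (cl'.symm j) : ℤ) - (topmost D.T (D.cl.symm j) : ℤ)

/-! `ψ` is a left inverse of `φ` on EW-tableaux. The EW condition makes the sets of 1s of any two
columns nested, so after sorting every row of `T'` is a run of 0s followed by a run of 1s, the top
row being all 1s. Step 4 then puts a 1 at the last 0 of each lower row, which is exactly what `ψ`
needs to read the row back. -/

theorem Finset.subset_of_total_of_card_le {α : Type*} {s t : Finset α} (hst : s ⊆ t ∨ t ⊆ s)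
    (hcard : s.card ≤ t.card) : s ⊆ t := by
  rcases hst with hst | hts
  · exact hst
  · exact (Finset.eq_of_subset_of_card_le hts hcard).ge

theorem Fin.lt_of_monotone_of_eq_false_of_eq_true {k : ℕ} {f : Fin k → Bool} (hf : Monotone f)
    {a b : Fin k} (ha : f a = false) (hb : f b = true) : a < b :=
  lt_of_not_ge fun hba => by simpa [ha] using Bool.le_iff_imp.mp (hf hba) hb

section Step4

variable {m n : ℕ} {S : Tab m n}

theorem exists_lt_step4_eq_true_iff {i : Fin (m + 1)} (hrow : Monotone (S i))
    (hzero : ∃ j₀, S i j₀ = false) (j : Fin (n + 1)) :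
    (∃ k < j, step4 S i k = true) ↔ S i j = true := by
  constructor
  · rintro ⟨k, hkj, hk⟩
    simp only [step4, Bool.or_eq_true, Bool.and_eq_true, Bool.not_eq_true',
      decide_eq_true_eq] at hk
    rcases hk with ⟨hk, -⟩ | ⟨-, hsucc⟩
    · exact Bool.le_iff_imp.mp (hrow hkj.le) hk
    · have hsucc_le : (⟨k + 1, by omega⟩ : Fin (n + 1)) ≤ j := Fin.le_def.mpr hkj
      exact Bool.le_iff_imp.mp (hrow hsucc_le) (hsucc ⟨k + 1, by omega⟩ rfl)
  · intro hj
    obtain ⟨j₀, hj₀⟩ := hzero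
    let zeros := Finset.univ.filter fun k => S i k = false
    have hne : zeros.Nonempty := ⟨j₀, by simp [zeros, hj₀]⟩
    set k := zeros.max' hne
    have hk : S i k = false := by simpa [zeros] using zeros.max'_mem hne
    have hkj : k < j := Fin.lt_of_monotone_of_eq_false_of_eq_true hrow hk hj
    have hsucc : S i ⟨k + 1, by omega⟩ = true := by
      by_contra hfalse
      have hle := zeros.le_max' ⟨k + 1, by omega⟩ (by simpa [zeros] using hfalse)
      exact absurd (Fin.le_def.mp hle) (by simp [k])
    refine ⟨k, hkj, ?_⟩
    simp only [step4, hk, Bool.not_false, Bool.true_and, Bool.false_and, Bool.false_or,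
      decide_eq_true_eq]
    intro j' hj'
    rwa [show j' = ⟨k + 1, by omega⟩ from Fin.ext hj']

theorem psiPre_step4 (hrow : ∀ i, Monotone (S i)) (htop : ∀ j, S 0 j = true)
    (hzero : ∀ i ≠ 0, ∃ j, S i j = false) : psiPre (step4 S) = S := by
  funext i j
  by_cases hi : i = 0
  · subst hi
    rw [htop j]
    by_cases hj : j = 0
    · simp [psiPre, hj]
    · -- The 0 of row 1 forces a 0 in its first cell, so Step 4 puts a 1 in the corner `(0, 0)`.
      have hcorner : step4 S 0 0 = true := by
        simp only [step4, htop, Bool.true_and, Bool.or_eq_true, decide_eq_true_eq]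
        left
        intro i' hi'
        have hi'0 : i' ≠ 0 := fun h => by simp [h] at hi'
        obtain ⟨j₀, hj₀⟩ := hzero i' hi'0
        simpa [hj₀] using mt (Bool.le_iff_imp.mp (hrow i' (Fin.zero_le j₀)))
      simp only [psiPre, decide_eq_true_eq]
      exact Or.inr ⟨0, Fin.pos_iff_ne_zero.mpr hj, hcorner⟩
  · have hrecover := exists_lt_step4_eq_true_iff (hrow i) (hzero i hi) j
    simp only [psiPre, hi, false_and, false_or]
    rw [Bool.eq_iff_iff, decide_eq_true_iff]
    exact hrecover

end Step4

section EW

variable {m n : ℕ} {T : Tab m n}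

theorem IsEW.colOnes_total (hT : IsEW T) (c c' : Fin (n + 1)) :
    (Finset.univ.filter fun i => T i c = true) ⊆ (Finset.univ.filter fun i => T i c' = true) ∨
    (Finset.univ.filter fun i => T i c' = true) ⊆ (Finset.univ.filter fun i => T i c = true) := by
  simp only [Finset.subset_iff, Finset.mem_filter, Finset.mem_univ, true_and]
  by_contra! hcon
  obtain ⟨⟨i, hic, hic'⟩, ⟨i', hi'c', hi'c⟩⟩ := hcon
  have hii' : i ≠ i' := by rintro rfl; simp_all
  have hcc' : c ≠ c' := by rintro rfl; simp_all
  rcases hT.2.2 i i' c c' hii' hcc' hic hi'c' with h | h <;> simp_all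

theorem IsEW.eq_zero_of_forall_eq_true (hT : IsEW T) {r : Fin (m + 1)}
    (hr : ∀ j, T r j = true) : r = 0 := by
  by_contra hr0
  obtain ⟨j, hj⟩ := hT.2.1 r hr0
  simp [hr j] at hj

theorem IsEW.sortRows_zero (hT : IsEW T) : sortRows T 0 = 0 := by
  let zeroCount := fun i => (Finset.univ.filter fun j : Fin (n + 1) => T i j = false).card
  have hle : zeroCount (sortRows T 0) ≤ zeroCount 0 := by
    show zeroCount (Tuple.sort zeroCount 0) ≤ _
    simpa using Tuple.monotone_sort zeroCount (Fin.zero_le ((Tuple.sort zeroCount).symm 0))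
  have htop : zeroCount 0 = 0 := by simp [zeroCount, hT.1]
  apply hT.eq_zero_of_forall_eq_true
  intro j
  have hempty := Finset.card_eq_zero.mp (Nat.le_zero.mp (htop ▸ hle))
  simpa using Finset.filter_eq_empty_iff.mp hempty (Finset.mem_univ j)

theorem IsEW.monotone_sortedTab (hT : IsEW T) (i : Fin (m + 1)) : Monotone (sortedTab T i) := by
  intro j j' hjj'
  have hcard := Tuple.monotone_sort
    (fun c => (Finset.univ.filter fun i => T i c = true).card) hjj'
  have hsub := Finset.subset_of_total_of_card_le
    (hT.colOnes_total (sortCols T j) (sortCols T j')) hcard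
  rw [Bool.le_iff_imp]
  simpa [sortedTab] using @hsub (sortRows T i)

theorem IsEW.sortedTab_zero (hT : IsEW T) (j : Fin (n + 1)) : sortedTab T 0 j = true := by
  simp only [sortedTab, hT.sortRows_zero, hT.1]

theorem IsEW.exists_sortedTab_eq_false (hT : IsEW T) {i : Fin (m + 1)} (hi : i ≠ 0) :
    ∃ j, sortedTab T i j = false := by
  have hrow : sortRows T i ≠ 0 := by
    rw [← hT.sortRows_zero]
    exact (sortRows T).injective.ne hi
  obtain ⟨c, hc⟩ := hT.2.1 _ hrow
  exact ⟨(sortCols T).symm c, by simpa [sortedTab] using hc⟩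

theorem IsEW.psi_phi (hT : IsEW T) : psi (phi T) = T := by
  have hpsiPre : psiPre (step4 (sortedTab T)) = sortedTab T :=
    psiPre_step4 hT.monotone_sortedTab hT.sortedTab_zero
      fun _ hi => hT.exists_sortedTab_eq_false hi
  funext i j
  simp [psi, phi, hpsiPre, sortedTab]

end EW

/-- The map `φ : EW → LRib` is injective. -/
theorem phi_injective {m n : ℕ} (A B : Tab m n) (hA : IsEW A) (hB : IsEW B)
    (h : phi A = phi B) : A = B := by
  rw [← hA.psi_phi, ← hB.psi_phi, h]

end EWPaper
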